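/- Let (T,f) be a partition tree of a graph G = (V,E). Then for every node a of T, the set A = ⋃ f(a) is a |f(a)|-module of G, with a corresponding module partition being f(a) itself. -/

import Mathlib

open scoped Classical

/-- A partition tree `(T, f)` of a graph `G` (Courcelle–Heggernes–et al.): a rooted tree
(given by a parent function `par` with root `root`) whose inner nodes have at least two
children, together with a map `f` assigning to each node a partition of a vertex-subset
of `G` (the node's *support* is `⋃₀ f a`), such that: every leaf carries a singleton
`{{v}}` and every vertex occurs at some leaf; the supports of the children of an inner
node are pairwise disjoint and their union is the node's support; the union of the
children's partitions refines the node's partition; and the node's partition is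
compatible with the edges between different children: adjacent vertices lying under
different children belong to distinct parts `X ≠ Y` of the node's partition, with a
complete join `X × Y ⊆ E`. -/
structure PartitionTree {V : Type*} (G : SimpleGraph V) where
  N : Type
  [instFin : Fintype N]
  root : N
  par : N → N
  par_root : par root = root
  reach_root : ∀ a : N, ∃ n : ℕ, par^[n] a = root
  f : N → Set (Set V)
  parts_nonempty : ∀ a : N, ∀ X ∈ f a, X.Nonempty
  parts_disjoint : ∀ a : N, (f a).PairwiseDisjoint id
  leaf_singleton : ∀ a : N, (∀ b, par b = a → b = a) → ∃ v : V, f a = {{v}}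
  vertex_leaf : ∀ v : V, ∃ a : N, f a = {{v}}
  inner_two_children : ∀ a : N, (∃ b, b ≠ a ∧ par b = a) →
    ∃ b c, b ≠ c ∧ b ≠ a ∧ c ≠ a ∧ par b = a ∧ par c = a
  children_disjoint : ∀ b c : N, b ≠ c → par b = par c → b ≠ par b → c ≠ par c →
    Disjoint (⋃₀ f b) (⋃₀ f c)
  support_eq : ∀ a : N, (∃ b, b ≠ a ∧ par b = a) →
    ⋃₀ f a = ⋃ b ∈ {b : N | b ≠ a ∧ par b = a}, ⋃₀ f b
  refines : ∀ b : N, b ≠ par b → ∀ X ∈ f b, ∃ Y ∈ f (par b), X ⊆ Y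
  compatible : ∀ b c : N, b ≠ c → b ≠ par b → c ≠ par c → par b = par c →
    ∀ u ∈ ⋃₀ f b, ∀ v ∈ ⋃₀ f c, G.Adj u v →
      ∀ X ∈ f (par b), ∀ Y ∈ f (par b), u ∈ X → v ∈ Y →
        X ≠ Y ∧ ∀ x ∈ X, ∀ y ∈ Y, G.Adj x y

/-!
Induct from the root downwards. At the root there is nothing outside the support. Passing from
`par a` to a child `a`, a part `X ∈ f a` lies inside a part `X' ∈ f (par a)`. A vertex `x` outside
the support of `a` is either outside that of `par a`, where `X'` already has uniform
neighbourhoods, or lies under a sibling of `a`; then an edge from `X` to `x` forces, by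
compatibility, a complete join between `X'` and the part of `x`.
-/

def SimpleGraph.IsModulePartition {V : Type*} (G : SimpleGraph V) (P : Set (Set V)) : Prop :=
  ∀ X ∈ P, ∀ u ∈ X, ∀ v ∈ X, ∀ x ∉ ⋃₀ P, (G.Adj u x ↔ G.Adj v x)

namespace PartitionTree

variable {V : Type*} {G : SimpleGraph V} (T : PartitionTree G)

theorem support_subset_support_par (b : T.N) : ⋃₀ T.f b ⊆ ⋃₀ T.f (T.par b) := by
  by_cases hb : b = T.par b
  · rw [← hb]
  · rintro x ⟨X, hX, hx⟩
    obtain ⟨Y, hY, hXY⟩ := T.refines b hb X hX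
    exact ⟨Y, hY, hXY hx⟩

theorem support_subset_support_iterate_par (b : T.N) :
    ∀ n : ℕ, ⋃₀ T.f b ⊆ ⋃₀ T.f (T.par^[n] b)
  | 0 => subset_rfl
  | n + 1 => by
    rw [Function.iterate_succ_apply']
    exact (support_subset_support_iterate_par b n).trans (T.support_subset_support_par _)

theorem mem_support_root (v : V) : v ∈ ⋃₀ T.f T.root := by
  obtain ⟨a, ha⟩ := T.vertex_leaf v
  obtain ⟨n, hn⟩ := T.reach_root a
  apply hn ▸ T.support_subset_support_iterate_par a n
  simp [ha]

theorem ne_par_of_ne_root {a : T.N} (ha : a ≠ T.root) : a ≠ T.par a := by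
  intro h
  obtain ⟨n, hn⟩ := T.reach_root a
  exact ha ((Function.iterate_fixed h.symm n).symm.trans hn)

theorem isModulePartition_root : G.IsModulePartition (T.f T.root) :=
  fun _ _ _ _ _ _ x hx => absurd (T.mem_support_root x) hx

theorem isModulePartition_of_par {a : T.N} (ha : a ≠ T.par a)
    (h : G.IsModulePartition (T.f (T.par a))) : G.IsModulePartition (T.f a) := by
  intro X hX u hu v hv x hx
  obtain ⟨X', hX', hXX'⟩ := T.refines a ha X hX
  by_cases hxp : x ∈ ⋃₀ T.f (T.par a)
  · obtain ⟨c, ⟨hca, hcpar⟩, hxc⟩ : ∃ c ∈ {c | c ≠ T.par a ∧ T.par c = T.par a}, x ∈ ⋃₀ T.f c := by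
      rw [T.support_eq (T.par a) ⟨a, ha, rfl⟩] at hxp
      simpa only [Set.mem_iUnion₂, exists_prop] using hxp
    obtain ⟨Z, hZ, hxZ⟩ := hcpar ▸ T.support_subset_support_par c hxc
    have hac : a ≠ c := by
      rintro rfl
      exact hx hxc
    have hc : c ≠ T.par c := hcpar ▸ hca
    have join_of_adj {w : V} (hw : w ∈ X) (hwx : G.Adj w x) (y : V) (hy : y ∈ X) : G.Adj y x :=
      (T.compatible a c hac ha hc hcpar.symm w ⟨X, hX, hw⟩ x hxc hwx X' hX' Z hZ (hXX' hw)
        hxZ).2 y (hXX' hy) x hxZ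
    exact ⟨fun hux => join_of_adj hu hux v hv, fun hvx => join_of_adj hv hvx u hu⟩
  · exact h X' hX' u (hXX' hu) v (hXX' hv) x hxp

theorem isModulePartition (a : T.N) : G.IsModulePartition (T.f a) := by
  obtain ⟨n, hn⟩ := T.reach_root a
  induction n generalizing a with
  | zero =>
    obtain rfl : a = T.root := hn
    exact T.isModulePartition_root
  | succ n ih =>
    by_cases ha : a = T.root
    · exact ha ▸ T.isModulePartition_root
    · exact T.isModulePartition_of_par (T.ne_par_of_ne_root ha) (ih (T.par a) hn)

end PartitionTree

theorem partitionTree_node_is_module {V : Type*} (G : SimpleGraph V)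
    (T : PartitionTree G) (a : T.N) :
    ∀ X ∈ T.f a, ∀ u ∈ X, ∀ v ∈ X, ∀ x ∉ ⋃₀ T.f a, (G.Adj u x ↔ G.Adj v x) :=
  T.isModulePartition a
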